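/- There exist two connected simple graphs G and H on the vertex set Fin 6 that are not isomorphic and whose walk-type matrices W_D(G) and W_D(H), built from their distance matrices, have equal characteristic polynomials. -/

import Mathlib

open Matrix

noncomputable section

open scoped Classical

/-- Adjacency matrix of a simple graph on `Fin n`, over `ℤ`. -/
def adjMat {n : ℕ} (G : SimpleGraph (Fin n)) : Matrix (Fin n) (Fin n) ℤ :=
  Matrix.of fun u v => if G.Adj u v then 1 else 0

/-- Degree matrix: diagonal matrix of vertex degrees. -/
def degMat {n : ℕ} (G : SimpleGraph (Fin n)) : Matrix (Fin n) (Fin n) ℤ :=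
  Matrix.diagonal fun v => ∑ u, if G.Adj v u then (1 : ℤ) else 0

/-- Laplacian matrix `L(G) = deg(G) - A(G)`. -/
def lapMat {n : ℕ} (G : SimpleGraph (Fin n)) : Matrix (Fin n) (Fin n) ℤ :=
  degMat G - adjMat G

/-- Distance matrix: `(u,v)`-entry is the graph distance between `u` and `v`. -/
def distMat {n : ℕ} (G : SimpleGraph (Fin n)) : Matrix (Fin n) (Fin n) ℤ :=
  Matrix.of fun u v => (G.dist u v : ℤ)

/-- Transmission matrix: diagonal matrix of vertex transmissions. -/
def trMat {n : ℕ} (G : SimpleGraph (Fin n)) : Matrix (Fin n) (Fin n) ℤ :=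
  Matrix.diagonal fun u => ∑ v, (G.dist u v : ℤ)

/-- Distance Laplacian matrix `D^L(G) = tr(G) - D(G)`. -/
def distLap {n : ℕ} (G : SimpleGraph (Fin n)) : Matrix (Fin n) (Fin n) ℤ :=
  trMat G - distMat G

/-- Walk-type matrix of `M`: the `j`-th column is `M^j · e`, `e` the all-ones vector. -/
def walkMat {n : ℕ} (M : Matrix (Fin n) (Fin n) ℤ) : Matrix (Fin n) (Fin n) ℤ :=
  Matrix.of fun i j => (M ^ (j : ℕ)).mulVec 1 i

/-- Two integer matrices are equivalent over `ℤ` if `N = P·M·Q` with `P, Q ∈ GL_n(ℤ)`. -/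
def ZEquiv {n : ℕ} (M N : Matrix (Fin n) (Fin n) ℤ) : Prop :=
  ∃ P Q : Matrix.GeneralLinearGroup (Fin n) ℤ,
    N = (P : Matrix (Fin n) (Fin n) ℤ) * M * (Q : Matrix (Fin n) (Fin n) ℤ)



/-- K3,3 with parts by parity. -/
def myG1 : SimpleGraph (Fin 6) where
  Adj u v := u.val % 2 ≠ v.val % 2
  symm := ⟨fun u v h => Ne.symm h⟩
  loopless := ⟨fun u h => h rfl⟩

/-- Triangular prism. -/
def myG2 : SimpleGraph (Fin 6) where
  Adj u v := u ≠ v ∧ (u.val / 3 = v.val / 3 ∨ u.val % 3 = v.val % 3)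
  symm := ⟨fun u v h => ⟨h.1.symm, h.2.imp Eq.symm Eq.symm⟩⟩
  loopless := ⟨fun u h => h.1 rfl⟩

instance : DecidableRel myG1.Adj := fun u v => inferInstanceAs (Decidable (_ ≠ _))
instance : DecidableRel myG2.Adj := fun u v => inferInstanceAs (Decidable (_ ∧ _))

lemma diam2 (G : SimpleGraph (Fin 6)) [DecidableRel G.Adj]
    (h : ∀ u v, u ≠ v → G.Adj u v ∨ ∃ w, G.Adj u w ∧ G.Adj w v) :
    G.Connected ∧ ∀ u v, G.dist u v =
      if u = v then 0 else if G.Adj u v then 1 else 2 := by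
  constructor
  · refine SimpleGraph.Connected.mk ?_
    intro u v
    by_cases huv : u = v
    · exact huv ▸ SimpleGraph.Reachable.refl u
    rcases h u v huv with hadj | ⟨w, h1, h2⟩
    · exact hadj.reachable
    · exact h1.reachable.trans h2.reachable
  · intro u v
    by_cases huv : u = v
    · simp [huv]
    by_cases hadj : G.Adj u v
    · simp [huv, hadj, SimpleGraph.dist_eq_one_iff_adj]
    rcases h u v huv with h' | ⟨w, h1, h2⟩
    · exact absurd h' hadj
    have hle : G.dist u v ≤ 2 := by
      have := SimpleGraph.dist_le (SimpleGraph.Walk.cons h1 (SimpleGraph.Walk.cons h2 SimpleGraph.Walk.nil))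
      simpa using this
    have hr : G.Reachable u v := h1.reachable.trans h2.reachable
    have h0 : G.dist u v ≠ 0 := fun hc => huv (hr.dist_eq_zero_iff.mp hc)
    have h1' : G.dist u v ≠ 1 := fun hc => hadj (SimpleGraph.dist_eq_one_iff_adj.mp hc)
    simp only [huv, hadj, if_false]
    omega

lemma walk_eq (G : SimpleGraph (Fin 6)) (h : ∀ u, ∑ v, (G.dist u v : ℤ) = 7) :
    walkMat (distMat G) = Matrix.of fun (_ j : Fin 6) => (7 : ℤ) ^ (j : ℕ) := by
  have key : ∀ j : ℕ, ((distMat G) ^ j).mulVec 1 = fun _ => (7 : ℤ) ^ j := by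
    intro j
    induction j with
    | zero =>
      funext x
      simp [Matrix.one_mulVec]
    | succ n ih =>
      rw [pow_succ, ← Matrix.mulVec_mulVec]
      funext i
      have : (distMat G).mulVec 1 = fun _ => (7 : ℤ) := by
        funext u
        simp [Matrix.mulVec, dotProduct, distMat, h u]
      rw [this]
      have : ((distMat G) ^ n).mulVec (fun _ => (7:ℤ)) =
          (7:ℤ) • ((distMat G) ^ n).mulVec 1 := by
        rw [← Matrix.mulVec_smul]
        congr 1
      rw [this, ih]
      simp [pow_succ, mul_comm]
  funext i j
  simp only [walkMat, Matrix.of_apply, key]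

theorem stmt16 :
    ∃ G H : SimpleGraph (Fin 6), G.Connected ∧ H.Connected ∧
      ¬ Nonempty (G ≃g H) ∧
      (walkMat (distMat G)).charpoly = (walkMat (distMat H)).charpoly := by
  refine ⟨myG1, myG2, ?_, ?_, ?_, ?_⟩
  case _ => exact (diam2 myG1 (by decide)).1
  case _ => exact (diam2 myG2 (by decide)).1
  case _ =>
    rintro ⟨f⟩
    have tfree : ∀ a b c : Fin 6, ¬ (myG1.Adj a b ∧ myG1.Adj b c ∧ myG1.Adj a c) := by decide
    have h01 : myG2.Adj 0 1 := by decide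
    have h12 : myG2.Adj 1 2 := by decide
    have h02 : myG2.Adj 0 2 := by decide
    exact tfree (f.symm 0) (f.symm 1) (f.symm 2)
      ⟨f.symm.map_rel_iff.mpr h01, f.symm.map_rel_iff.mpr h12, f.symm.map_rel_iff.mpr h02⟩
  case _ =>
    have e1 := walk_eq myG1 (by
      intro u
      have hd := (diam2 myG1 (by decide)).2
      calc ∑ v, (myG1.dist u v : ℤ)
          = ∑ v, ((if u = v then 0 else if myG1.Adj u v then 1 else 2 : ℕ) : ℤ) := by
            refine Finset.sum_congr rfl fun v _ => by rw [hd u v]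
        _ = 7 := by revert u; decide)
    have e2 := walk_eq myG2 (by
      intro u
      have hd := (diam2 myG2 (by decide)).2
      calc ∑ v, (myG2.dist u v : ℤ)
          = ∑ v, ((if u = v then 0 else if myG2.Adj u v then 1 else 2 : ℕ) : ℤ) := by
            refine Finset.sum_congr rfl fun v _ => by rw [hd u v]
        _ = 7 := by revert u; decide)
    rw [e1, e2]
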